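/- arXiv:1511.07180 — 2 statements merged into one kernel-verified Lean document; each statement's English description precedes it below -/
import Mathlib

section
/- Let g : {1,...,n} → {1,...,n} and let 1 ≤ i ≤ n. Define LPF_g[i] := max{|u| : there exists a word v with |v| ≥ g(i) such that u·v is a suffix of w[1..i−1] and u is a prefix of w[i..n]}, with max of the empty set equal to 0. Then LPF_g[i] = max({0} ∪ { min(LCP(j,i), i − g(i) − j) : 1 ≤ j ≤ i − g(i) − 1 }). -/
/- Words are `List α`, positions are 1-based.  `ltr w i` is the letter at position `i`,
`fac w i j` is the factor `w[i..j]` (empty when `i > j`). -/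

variable {α : Type*}

def ltr (w : List α) (i : ℕ) : Option α := w[i - 1]?

def fac (w : List α) (i j : ℕ) : List α := (w.take j).drop (i - 1)

/-- `LCP w i j` : length of the longest common prefix of the suffixes `w[i..n]`, `w[j..n]`. -/
noncomputable def LCP (w : List α) (i j : ℕ) : ℕ :=
  sSup {ℓ | i + ℓ - 1 ≤ w.length ∧ j + ℓ - 1 ≤ w.length ∧
    ∀ t < ℓ, ltr w (i + t) = ltr w (j + t)}

/-- `LPF_g[i]` : the maximal `|u|` such that for some `v` with `|v| ≥ g(i)`,
`u·v` is a suffix of `w[1..i-1]` and `u` is a prefix of `w[i..n]` (0 if none). -/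
noncomputable def LPFg (w : List α) (g : ℕ → ℕ) (i : ℕ) : ℕ :=
  sSup {m | ∃ u v : List α, u.length = m ∧ g i ≤ v.length ∧
    (u ++ v) <:+ fac w 1 (i - 1) ∧ u <+: fac w i w.length}

lemma fac_length (w : List α) (a b : ℕ) : (fac w a b).length = min b w.length - (a-1) := by
  simp [fac]

lemma fac_getElem? (w : List α) (a b t : ℕ) (h : a - 1 + t < b) :
    (fac w a b)[t]? = w[a - 1 + t]? := by
  simp [fac, List.getElem?_drop, List.getElem?_take, h]

lemma fac_append (w : List α) (a b c : ℕ) (hab : a ≤ b + 1) (hbc : b ≤ c) :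
    fac w a c = fac w a b ++ fac w (b+1) c := by
  unfold fac
  rw [← List.take_append_drop (b - (a-1)) ((w.take c).drop (a-1))]
  congr 1
  · rw [List.take_drop]
    have : a - 1 + (b - (a-1)) = b := by omega
    rw [this, List.take_take, min_eq_left hbc]
  · rw [List.drop_drop]
    have : a - 1 + (b - (a-1)) = b := by omega
    rw [this, Nat.add_sub_cancel]

lemma LCP_bddAbove (w : List α) (i j : ℕ) (hi : 1 ≤ i) :
    BddAbove {ℓ | i + ℓ - 1 ≤ w.length ∧ j + ℓ - 1 ≤ w.length ∧
      ∀ t < ℓ, ltr w (i + t) = ltr w (j + t)} :=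
  ⟨w.length, fun ℓ hℓ => by have := hℓ.1; omega⟩

lemma LCP_mem (w : List α) (i j : ℕ) (hi : 1 ≤ i) (hj : j ≤ w.length + 1)
    (hiw : i ≤ w.length + 1) :
    i + LCP w i j - 1 ≤ w.length ∧ j + LCP w i j - 1 ≤ w.length ∧
      ∀ t < LCP w i j, ltr w (i + t) = ltr w (j + t) := by
  have h0 : (0:ℕ) ∈ {ℓ | i + ℓ - 1 ≤ w.length ∧ j + ℓ - 1 ≤ w.length ∧
      ∀ t < ℓ, ltr w (i + t) = ltr w (j + t)} := by
    refine ⟨by omega, by omega, fun t ht => by omega⟩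
  exact Nat.sSup_mem ⟨0, h0⟩ (LCP_bddAbove w i j hi)

lemma LCP_ge (w : List α) (i j m : ℕ) (hi : 1 ≤ i)
    (h1 : i + m - 1 ≤ w.length) (h2 : j + m - 1 ≤ w.length)
    (h3 : ∀ t < m, ltr w (i + t) = ltr w (j + t)) : m ≤ LCP w i j :=
  le_csSup (LCP_bddAbove w i j hi) ⟨h1, h2, h3⟩

theorem LPFg_eq_max_min_LCP
    (w : List α) (n : ℕ) (hlen : w.length = n) (hn : 1 ≤ n)
    (g : ℕ → ℕ) (hg : ∀ i, 1 ≤ i → i ≤ n → 1 ≤ g i ∧ g i ≤ n)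
    (i : ℕ) (hi : 1 ≤ i) (hin : i ≤ n) :
    LPFg w g i =
      sSup ({0} ∪ {m : ℕ | ∃ j : ℕ, 1 ≤ j ∧ j ≤ i - g i - 1 ∧
        m = min (LCP w j i) (i - g i - j)}) := by
  obtain ⟨hg1, hg2⟩ := hg i hi hin
  set T : Set ℕ := {0} ∪ {m : ℕ | ∃ j : ℕ, 1 ≤ j ∧ j ≤ i - g i - 1 ∧
        m = min (LCP w j i) (i - g i - j)} with hT
  set S : Set ℕ := {m | ∃ u v : List α, u.length = m ∧ g i ≤ v.length ∧
    (u ++ v) <:+ fac w 1 (i - 1) ∧ u <+: fac w i w.length} with hS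
  have hTbdd : BddAbove T := by
    refine ⟨i, fun m hm => ?_⟩
    rcases hm with hm | ⟨j, hj1, hj2, rfl⟩
    · simp only [Set.mem_singleton_iff] at hm; omega
    · have : min (LCP w j i) (i - g i - j) ≤ i - g i - j := min_le_right _ _
      omega
  have hSbdd : BddAbove S := by
    refine ⟨n, fun m hm => ?_⟩
    obtain ⟨u, v, hu, hgv, hsuff, hpref⟩ := hm
    have := List.IsSuffix.length_le hsuff
    rw [fac_length] at this
    simp at this
    omega
  have key1 : ∀ m ∈ S, m ≤ sSup T := by
    intro m hm
    obtain ⟨u, v, hu, hgv, hsuff, hpref⟩ := hm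
    rcases Nat.eq_zero_or_pos m with rfl | hmpos
    · exact le_csSup hTbdd (Or.inl rfl)
    obtain ⟨p, hp⟩ := hsuff
    obtain ⟨q, hq⟩ := hpref
    -- length facts
    have hlfac : (fac w 1 (i-1)).length = i - 1 := by
      rw [fac_length]; omega
    have hlfac2 : (fac w i w.length).length = n - (i-1) := by
      rw [fac_length]; omega
    have hlens : p.length + (m + v.length) = i - 1 := by
      have := congrArg List.length hp
      simp [hlfac, hu] at this
      omega
    have hmle : m ≤ n - (i - 1) := by
      have := congrArg List.length hq
      simp [hlfac2, hu] at this
      omega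
    set j : ℕ := p.length + 1 with hj
    -- characters of u
    have huchar : ∀ t < m, u[t]? = w[j - 1 + t]? ∧ u[t]? = w[i - 1 + t]? := by
      intro t ht
      constructor
      · have h1 : (fac w 1 (i-1))[p.length + t]? = w[p.length + t]? := by
          have := fac_getElem? w 1 (i-1) (p.length + t) (by omega)
          simpa using this
        rw [← hp, List.getElem?_append_right (by omega)] at h1
        simp only [Nat.add_sub_cancel_left] at h1
        rw [List.getElem?_append, if_pos (by omega)] at h1
        have : j - 1 + t = p.length + t := by omega
        rw [this, ← h1]
      · have h2 : (fac w i w.length)[t]? = w[i - 1 + t]? := by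
          exact fac_getElem? w i w.length t (by omega)
        rw [← hq, List.getElem?_append, if_pos (by omega)] at h2
        exact h2
    have hlcp : m ≤ LCP w j i := by
      refine LCP_ge w j i m (by omega) (by omega) (by omega) ?_
      intro t ht
      obtain ⟨e1, e2⟩ := huchar t ht
      simp only [ltr]
      have a1 : j + t - 1 = j - 1 + t := by omega
      have a2 : i + t - 1 = i - 1 + t := by omega
      rw [a1, a2, ← e1, ← e2]
    have helem : min (LCP w j i) (i - g i - j) ∈ T := by
      exact Or.inr ⟨j, by omega, by omega, rfl⟩
    have : m ≤ min (LCP w j i) (i - g i - j) := by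
      refine le_min hlcp ?_
      omega
    exact this.trans (le_csSup hTbdd helem)
  have key2 : ∀ m ∈ T, m ≤ sSup S := by
    intro m hm
    rcases hm with hm | ⟨j, hj1, hj2, rfl⟩
    · simp only [Set.mem_singleton_iff] at hm
      subst hm
      exact Nat.zero_le _
    set ℓ : ℕ := min (LCP w j i) (i - g i - j) with hℓ
    rcases Nat.eq_zero_or_pos ℓ with h0 | hℓpos
    · rw [h0]; exact Nat.zero_le _
    have hℓ1 : ℓ ≤ LCP w j i := min_le_left _ _
    have hℓ2 : ℓ ≤ i - g i - j := min_le_right _ _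
    obtain ⟨hL1, hL2, hLchar⟩ := LCP_mem w j i (by omega) (by omega) (by omega)
    have hjLn : j + LCP w j i - 1 ≤ n := by omega
    have hiLn : i + LCP w j i - 1 ≤ n := by omega
    refine le_csSup hSbdd ⟨fac w j (j+ℓ-1), fac w (j+ℓ) (i-1), ?_, ?_, ?_, ?_⟩
    · rw [fac_length]; omega
    · rw [fac_length]; omega
    · have : fac w j (j+ℓ-1) ++ fac w (j+ℓ) (i-1) = fac w j (i-1) := by
        have e : j + ℓ - 1 + 1 = j + ℓ := by omega
        have h := fac_append w j (j+ℓ-1) (i-1) (by omega) (by omega)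
        rw [e] at h
        exact h.symm
      rw [this]
      have e1 : fac w 1 (i-1) = w.take (i-1) := by simp [fac]
      have e2 : fac w j (i-1) = (w.take (i-1)).drop (j-1) := by simp [fac]
      rw [e1, e2]
      exact List.drop_suffix _ _
    · have : fac w j (j+ℓ-1) = (fac w i w.length).take ℓ := by
        apply List.ext_getElem?
        intro t
        rcases Nat.lt_or_ge t ℓ with ht | ht
        · rw [fac_getElem? w j (j+ℓ-1) t (by omega)]
          rw [List.getElem?_take, if_pos ht, fac_getElem? w i w.length t (by omega)]
          have := hLchar t (by omega)
          simp only [ltr] at this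
          have a1 : j + t - 1 = j - 1 + t := by omega
          have a2 : i + t - 1 = i - 1 + t := by omega
          rw [a1, a2] at this
          exact this
        · rw [List.getElem?_eq_none, List.getElem?_eq_none]
          · simp only [List.length_take]
            omega
          · rw [fac_length]; omega
      rw [this]
      exact List.take_prefix _ _
  apply le_antisymm
  · exact csSup_le' key1
  · exact csSup_le' key2
end

section
/- Let g : {1,...,n} → {1,...,n} and define LPF_g[i] := max{|u| : there exists a word v with |v| ≥ g(i) such that u·v is a suffix of w[1..i−1] and u is a prefix of w[i..n]}, with max of the empty set equal to 0. For every position i with LPF_g[i] ≥ 1, the set { j ≥ 1 : LCP(j,i) ≥ LPF_g[i] and j + LPF_g[i] ≤ i − g(i) } is nonempty, and its minimum B[i] satisfies LPF_g[i] = min(LCP(B[i], i), i − g(i) − B[i]). -/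
/- Words are `List α`, positions are 1-based.  `ltr w i` is the letter at position `i`,
`fac w i j` is the factor `w[i..j]` (empty when `i > j`). -/

variable {α : Type*}

private lemma lcp_ge {w : List α} {a b k : ℕ} (ha : 1 ≤ a)
    (h : a + k - 1 ≤ w.length ∧ b + k - 1 ≤ w.length ∧
      ∀ t < k, ltr w (a + t) = ltr w (b + t)) :
    k ≤ LCP w a b := by
  unfold LCP
  exact le_csSup ⟨w.length, fun ℓ hℓ => by have := hℓ.1; omega⟩ h

private lemma lcp_extract {w : List α} {a b k : ℕ} (ha : 1 ≤ a) (hk : 1 ≤ k)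
    (h : k ≤ LCP w a b) :
    a + k - 1 ≤ w.length ∧ b + k - 1 ≤ w.length ∧
      ∀ t < k, ltr w (a + t) = ltr w (b + t) := by
  set S := {ℓ | a + ℓ - 1 ≤ w.length ∧ b + ℓ - 1 ≤ w.length ∧
    ∀ t < ℓ, ltr w (a + t) = ltr w (b + t)} with hS
  have hdef : LCP w a b = sSup S := rfl
  have hbdd : BddAbove S := ⟨w.length, fun ℓ hℓ => by have := hℓ.1; omega⟩
  have hne : S.Nonempty := by
    by_contra hc
    rw [Set.not_nonempty_iff_eq_empty] at hc
    rw [hdef, hc, csSup_empty] at h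
    simp at h
    omega
  have hmem : sSup S ∈ S := Nat.sSup_mem hne hbdd
  have hk' : k ≤ sSup S := by rw [hdef] at h; exact h
  refine ⟨by have := hmem.1; omega, by have := hmem.2.1; omega,
    fun t ht => hmem.2.2 t (by omega)⟩

theorem LPFg_realised_at_leftmost_position
    (w : List α) (n : ℕ) (hlen : w.length = n) (hn : 1 ≤ n)
    (g : ℕ → ℕ) (hg : ∀ i, 1 ≤ i → i ≤ n → 1 ≤ g i ∧ g i ≤ n)
    (i : ℕ) (hi : 1 ≤ i) (hin : i ≤ n) (hpos : 1 ≤ LPFg w g i) :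
    {j : ℕ | 1 ≤ j ∧ LPFg w g i ≤ LCP w j i ∧ j + LPFg w g i ≤ i - g i}.Nonempty ∧
    LPFg w g i =
      min (LCP w (sInf {j : ℕ | 1 ≤ j ∧ LPFg w g i ≤ LCP w j i ∧ j + LPFg w g i ≤ i - g i}) i)
        (i - g i - sInf {j : ℕ | 1 ≤ j ∧ LPFg w g i ≤ LCP w j i ∧ j + LPFg w g i ≤ i - g i}) := by
  have hgi := hg i hi hin
  have hfac1 : fac w 1 (i - 1) = w.take (i - 1) := by simp [fac]
  have hfacn : fac w i w.length = w.drop (i - 1) := by simp [fac]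
  set M := {m | ∃ u v : List α, u.length = m ∧ g i ≤ v.length ∧
    (u ++ v) <:+ fac w 1 (i - 1) ∧ u <+: fac w i w.length} with hM
  have hMdef : LPFg w g i = sSup M := rfl
  set L := LPFg w g i with hLdef
  have hMbdd : BddAbove M := by
    refine ⟨n, ?_⟩
    rintro m ⟨u, v, hu, hv, hsuf, hpre⟩
    have h1 := hsuf.length_le
    rw [hfac1] at h1
    simp at h1
    omega
  have hMne : M.Nonempty := by
    by_contra hc
    rw [Set.not_nonempty_iff_eq_empty] at hc
    rw [hMdef, hc, csSup_empty] at hpos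
    simp at hpos
  obtain ⟨u, v, hu, hv, hsuf, hpre⟩ : L ∈ M := hMdef ▸ Nat.sSup_mem hMne hMbdd
  obtain ⟨p, hp⟩ := hsuf
  rw [hfac1] at hp
  have hplen : p.length + (L + v.length) = i - 1 := by
    have := congrArg List.length hp
    simp [hu] at this
    omega
  obtain ⟨s, hs⟩ := hpre
  rw [hfacn] at hs
  have hslen : L + s.length = w.length - (i - 1) := by
    have := congrArg List.length hs
    simp [hu] at this
    omega
  set j := p.length + 1 with hj
  have hlet : ∀ t < L, ltr w (j + t) = ltr w (i + t) := by
    intro t ht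
    have h1 : ltr w (j + t) = u[t]? := by
      have e1 : (p ++ (u ++ v))[p.length + t]? = u[t]? := by
        rw [List.getElem?_append_right (by omega),
          List.getElem?_append_left (by omega)]
        congr 1
        omega
      rw [hp, List.getElem?_take, if_pos (by omega)] at e1
      rw [ltr, show j + t - 1 = p.length + t by omega]
      exact e1
    have h2 : ltr w (i + t) = u[t]? := by
      have e2 : (u ++ s)[t]? = u[t]? := List.getElem?_append_left (by omega)
      rw [hs, List.getElem?_drop] at e2
      rw [ltr, show i + t - 1 = i - 1 + t by omega]
      exact e2
    rw [h1, h2]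
  have hjmem : j ∈ {j : ℕ | 1 ≤ j ∧ L ≤ LCP w j i ∧ j + L ≤ i - g i} := by
    refine ⟨by omega, lcp_ge (by omega) ⟨by omega, by omega, hlet⟩, by omega⟩
  refine ⟨⟨j, hjmem⟩, ?_⟩
  have hB := Nat.sInf_mem ⟨j, hjmem⟩
  set B := sInf {j : ℕ | 1 ≤ j ∧ L ≤ LCP w j i ∧ j + L ≤ i - g i} with hBdef
  obtain ⟨hB1, hB2, hB3⟩ : 1 ≤ B ∧ L ≤ LCP w B i ∧ B + L ≤ i - g i := hB
  refine le_antisymm (le_min hB2 (by omega)) ?_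
  by_contra hc
  push_neg at hc
  have hc1 : L + 1 ≤ LCP w B i := by omega
  have hc2 : B + (L + 1) ≤ i - g i := by omega
  obtain ⟨he1, he2, he3⟩ := lcp_extract hB1 (by omega) hc1
  -- build the longer occurrence
  set s0 := (w.take (i - 1)).drop (B - 1) with hs0
  have hs0len : s0.length = i - B := by
    simp [hs0]
    omega
  have hmem' : L + 1 ∈ M := by
    refine ⟨s0.take (L + 1), s0.drop (L + 1), ?_, ?_, ?_, ?_⟩
    · simp [hs0len]; omega
    · simp [hs0len]; omega
    · rw [List.take_append_drop, hfac1, hs0]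
      exact List.drop_suffix _ _
    · rw [hfacn]
      have : s0.take (L + 1) = (w.drop (i - 1)).take (L + 1) := by
        apply List.ext_getElem?
        intro t
        rw [List.getElem?_take, List.getElem?_take]
        by_cases ht : t < L + 1
        · rw [if_pos ht, if_pos ht, hs0, List.getElem?_drop, List.getElem?_take,
            if_pos (by omega), List.getElem?_drop]
          have := he3 t (by omega)
          rw [ltr, ltr, show B + t - 1 = B - 1 + t by omega,
            show i + t - 1 = i - 1 + t by omega] at this
          exact this
        · rw [if_neg ht, if_neg ht]
      rw [this]
      exact List.take_prefix _ _
  have h4 : L + 1 ≤ sSup M := le_csSup hMbdd hmem'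
  rw [← hMdef] at h4
  omega
end
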